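/- For every natural number n ≥ 1, let W be a freely reduced word over the alphabet {k^{±1}, a^{±1}} that contains k aⁿ k as a contiguous subword. Then every word U over the alphabet {θ1^{±1}, θ2^{±1}, a^{±1}, k^{±1}} that represents the same element of G as W satisfies |U| > n/2. -/

import Mathlib

/-- The four generators θ₁, θ₂, a, k of the free group `F` on four letters. -/
def theta1 : FreeGroup (Fin 4) := FreeGroup.of 0
def theta2 : FreeGroup (Fin 4) := FreeGroup.of 1
def aF : FreeGroup (Fin 4) := FreeGroup.of 2
def kF : FreeGroup (Fin 4) := FreeGroup.of 3

/-- The four defining relators θᵢ⁻¹aθᵢa⁻¹ and θᵢ⁻¹kθᵢa⁻¹k⁻¹, i = 1,2. -/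
def rels : Set (FreeGroup (Fin 4)) :=
  {theta1⁻¹ * aF * theta1 * aF⁻¹, theta2⁻¹ * aF * theta2 * aF⁻¹,
   theta1⁻¹ * kF * theta1 * aF⁻¹ * kF⁻¹, theta2⁻¹ * kF * theta2 * aF⁻¹ * kF⁻¹}

/-- The group `G = ⟨θ₁, θ₂, a, k ∣ aᶿⁱ = a, kᶿⁱ = ka⟩`. -/
abbrev G : Type := PresentedGroup rels

/-- The quotient map `F → G`. -/
def π : FreeGroup (Fin 4) →* G := PresentedGroup.mk rels

/-!
Sending `θ₁, θ₂ ↦ t` maps `G` onto `Q = F ⋊ ⟨t⟩`, where `t` fixes `a` and sends `k` to `k a⁻¹`;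
on words over `{a, k}` this map is just the inclusion of `F`.

Reading `U` letter by letter, we keep its image in `Q` as an alternating product of syllables
`aˣ tʸ` and letters `k^{±1}`, and cancel a pinch `k aˣ tʸ k⁻¹` (with `x + y = 0`) or
`k⁻¹ aˣ tʸ k` (with `x = 0`) as soon as it appears. The pinch equals the single syllable `tʸ`,
resp. `a⁻ʸ tʸ`, so the total cost `∑ max (|x|, |y|)` of the syllables stays at most `|U|`.
Once no pinch is left, moving all `t`'s to the right yields a freely reduced word over `{a, k}`,
which must therefore be `W`. Its block `aⁿ` between two letters `k` is `a^(x - m)`, where `aˣ tʸ`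
is the syllable between them and `m` the total exponent of `t` before them; hence `n ≤ |U|`.
-/

theorem List.eq_or_exists_of_append_cons_eq_append_cons {α : Type*} {X Y X' Y' : List α}
    {x y : α} (hy : y ∉ Y) (h : X ++ x :: Y = X' ++ y :: Y') :
    (X = X' ∧ x = y ∧ Y = Y') ∨ ∃ Z, X = X' ++ y :: Z ∧ Y' = Z ++ x :: Y := by
  rcases List.append_eq_append_iff.1 h with ⟨_ | ⟨b, Z⟩, rfl, h'⟩ | ⟨_ | ⟨b, Z⟩, rfl, h'⟩
  · simp_all
  · simp only [List.cons_append, List.cons.injEq] at h'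
    exact absurd (h'.2 ▸ List.mem_append_right _ List.mem_cons_self) hy
  · simp_all
  · simp only [List.cons_append, List.cons.injEq] at h'
    exact Or.inr ⟨Z, h'.1 ▸ rfl, h'.2⟩

namespace LongWords

open SemidirectProduct

/-- In `Q`, `t x t⁻¹ = twist x`; hence `t⁻¹ k t = k a`, as for `θᵢ` in `G`. -/
def twist : MulAut (FreeGroup (Fin 4)) :=
  MonoidHom.toMulEquiv (FreeGroup.lift fun i => if i = 3 then kF * aF⁻¹ else .of i)
    (FreeGroup.lift fun i => if i = 3 then kF * aF else .of i)
    (by ext i; by_cases h : i = 3 <;> simp [h, kF, aF])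
    (by ext i; by_cases h : i = 3 <;> simp [h, kF, aF])

lemma twist_zpow_aF (m : ℤ) : (twist ^ m) aF = aF := by
  have h := Equiv.Perm.zpow_apply_eq_self_of_apply_eq_self (f := MulAut.toPerm _ twist)
    (x := aF) (show twist aF = aF by simp [twist, aF]) m
  rwa [← map_zpow] at h

lemma twist_zpow_kF (m : ℤ) : (twist ^ m) kF = kF * aF ^ (-m) := by
  induction m using Int.induction_on with
  | zero => simp
  | succ m ih =>
    rw [add_comm, zpow_add, zpow_one, MulAut.mul_apply, ih, map_mul, map_zpow]
    simp [twist, kF, aF]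
    group
  | pred m ih =>
    rw [sub_eq_neg_add, zpow_add, zpow_neg_one, MulAut.mul_apply, ih, map_mul, map_zpow]
    simp [twist, kF, aF]
    group

lemma mk_singleton_three (ε : Bool) :
    FreeGroup.mk [(3, ε)] = if ε then kF else kF⁻¹ := by
  cases ε
  · rw [kF, FreeGroup.of, FreeGroup.inv_mk]; rfl
  · rfl

lemma twist_zpow_mk_singleton_three (m : ℤ) (ε : Bool) :
    (twist ^ m) (FreeGroup.mk [(3, ε)]) =
      aF ^ (if ε then 0 else m) * FreeGroup.mk [(3, ε)] * aF ^ (if ε then -m else 0) := by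
  cases ε <;> simp [mk_singleton_three, twist_zpow_kF]

abbrev Q := FreeGroup (Fin 4) ⋊[zpowersHom _ twist] Multiplicative ℤ

def atPow (v : ℤ × ℤ) : Q := ⟨aF ^ v.1, .ofAdd v.2⟩

def kLetter (ε : Bool) : Q := inl (FreeGroup.mk [(3, ε)])

@[simp] lemma left_atPow (v : ℤ × ℤ) : (atPow v).left = aF ^ v.1 := rfl
@[simp] lemma right_atPow (v : ℤ × ℤ) : (atPow v).right = .ofAdd v.2 := rfl
@[simp] lemma left_kLetter (ε : Bool) : (kLetter ε).left = FreeGroup.mk [(3, ε)] := rfl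
@[simp] lemma right_kLetter (ε : Bool) : (kLetter ε).right = 1 := rfl

lemma atPow_add (v w : ℤ × ℤ) : atPow (v + w) = atPow v * atPow w := by
  ext
  · show aF ^ (v.1 + w.1) = aF ^ v.1 * (twist ^ v.2) (aF ^ w.1)
    rw [map_zpow, twist_zpow_aF, zpow_add]
  · rfl

lemma atPow_zero : atPow 0 = 1 := rfl

lemma atPow_neg (v : ℤ × ℤ) : atPow (-v) = (atPow v)⁻¹ :=
  eq_inv_of_mul_eq_one_left (by rw [← atPow_add, neg_add_cancel, atPow_zero])

lemma kLetter_not (ε : Bool) : kLetter (!ε) = (kLetter ε)⁻¹ := by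
  rw [kLetter, kLetter, ← map_inv, FreeGroup.inv_mk]
  cases ε <;> rfl

def genVec (i : Fin 4) : ℤ × ℤ := if i = 2 then (1, 0) else (0, 1)

def gen (i : Fin 4) : Q := if i = 3 then kLetter true else atPow (genVec i)

lemma lift_gen_of_mem_rels : ∀ r ∈ rels, FreeGroup.lift gen r = 1 := by
  have ha : twist.symm (.of 2) = .of 2 := by simpa [aF] using twist_zpow_aF (-1)
  have hk : twist.symm (.of 3) = .of 3 * .of 2 := by simpa [aF, kF] using twist_zpow_kF (-1)
  rintro r (rfl | rfl | rfl | rfl) <;> ext <;>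
    simp [theta1, theta2, aF, kF, gen, genVec, mul_left, inv_left, mk_singleton_three, ha, hk]

lemma lift_gen_mk {W : List (Fin 4 × Bool)} (hW : ∀ x ∈ W, x.1 = 2 ∨ x.1 = 3) :
    FreeGroup.lift gen (FreeGroup.mk W) = inl (FreeGroup.mk W) := by
  rw [← FreeGroup.lift.apply_symm_apply (inl : FreeGroup (Fin 4) →* Q), FreeGroup.lift_mk,
    FreeGroup.lift_mk]
  congr 1
  refine List.map_congr_left fun x hx => ?_
  have : gen x.1 = inl (.of x.1) := by
    rcases hW x hx with h | h <;> rw [h]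
    · ext <;> rfl
    · rfl
  simp [this]

/-- `eval [(εᵣ, vᵣ₋₁), …, (ε₁, v₀)] vᵣ`
`= atPow v₀ * kLetter ε₁ * atPow v₁ * ⋯ * kLetter εᵣ * atPow vᵣ`: each entry is a letter
`k^{±1}` with the syllable in front of it, the last letter first. -/
def eval : List (Bool × ℤ × ℤ) → ℤ × ℤ → Q
  | [], v => atPow v
  | (ε, u) :: l, v => eval l u * kLetter ε * atPow v

def level : List (Bool × ℤ × ℤ) → ℤ × ℤ → ℤ
  | [], v => v.2
  | (_, u) :: l, v => level l u + v.2

/-- The norm on `ℤ × ℤ` is the sup norm; the `ℓ¹` norm would grow under `k⁻¹ tʸ k = a⁻ʸ tʸ`. -/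
noncomputable def cost : List (Bool × ℤ × ℤ) → ℤ × ℤ → ℝ
  | [], v => ‖v‖
  | (_, u) :: l, v => cost l u + ‖v‖

def Cancels (ε' : Bool) (u : ℤ × ℤ) (ε : Bool) : Prop :=
  ε = !ε' ∧ (if ε' then u.1 + u.2 else u.1) = 0

instance (ε' : Bool) (u : ℤ × ℤ) (ε : Bool) : Decidable (Cancels ε' u ε) := by
  unfold Cancels; infer_instance

def collapse (ε' : Bool) (u : ℤ × ℤ) : ℤ × ℤ := if ε' then (0, u.2) else (-u.2, u.2)

def IsPinchFree (l : List (Bool × ℤ × ℤ)) : Prop := l.IsChain fun x y => ¬ Cancels y.1 x.2 x.1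

def pushK (ε : Bool) : List (Bool × ℤ × ℤ) → ℤ × ℤ → List (Bool × ℤ × ℤ) × (ℤ × ℤ)
  | [], v => ([(ε, v)], 0)
  | (ε', u) :: l, v =>
    if Cancels ε' v ε then (l, u + collapse ε' v) else ((ε, v) :: (ε', u) :: l, 0)

def step (S : List (Bool × ℤ × ℤ) × (ℤ × ℤ)) (x : Fin 4 × Bool) :
    List (Bool × ℤ × ℤ) × (ℤ × ℤ) :=
  if x.1 = 3 then pushK x.2 S.1 S.2 else (S.1, S.2 + if x.2 then genVec x.1 else -genVec x.1)

def normalForm (U : List (Fin 4 × Bool)) : List (Bool × ℤ × ℤ) × (ℤ × ℤ) := U.foldl step ([], 0)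

lemma eval_add (l : List (Bool × ℤ × ℤ)) (v w : ℤ × ℤ) :
    eval l (v + w) = eval l v * atPow w := by
  cases l <;> simp [eval, atPow_add, mul_assoc]

lemma cost_add_le (l : List (Bool × ℤ × ℤ)) (v w : ℤ × ℤ) : cost l (v + w) ≤ cost l v + ‖w‖ := by
  cases l <;> simp only [cost] <;> linarith [norm_add_le v w]

lemma kLetter_mul_atPow_mul_kLetter {ε' ε : Bool} {u : ℤ × ℤ} (h : Cancels ε' u ε) :
    kLetter ε' * atPow u * kLetter ε = atPow (collapse ε' u) := by
  obtain ⟨rfl, hu⟩ := h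
  ext
  · cases ε' <;> simp at hu <;> simp [collapse, mul_left, twist_zpow_kF, mk_singleton_three]
    · simp [hu]
    · rw [show u.1 = -u.2 by omega]; group
  · cases ε' <;> simp [collapse, mul_right]

lemma norm_collapse_le {ε' ε : Bool} {u : ℤ × ℤ} (h : Cancels ε' u ε) :
    ‖collapse ε' u‖ ≤ ‖u‖ := by
  obtain ⟨-, hu⟩ := h
  cases ε' <;> simp_all [collapse, Prod.norm_def]

lemma eval_pushK (ε : Bool) (l : List (Bool × ℤ × ℤ)) (v : ℤ × ℤ) :
    eval (pushK ε l v).1 (pushK ε l v).2 = eval l v * kLetter ε := by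
  cases l with
  | nil => simp [pushK, eval, atPow_zero]
  | cons e l =>
    obtain ⟨ε', u⟩ := e
    simp only [pushK]
    split_ifs with h
    · simp [eval, eval_add, mul_assoc, ← kLetter_mul_atPow_mul_kLetter h]
    · simp [eval, atPow_zero]

lemma cost_pushK_le (ε : Bool) (l : List (Bool × ℤ × ℤ)) (v : ℤ × ℤ) :
    cost (pushK ε l v).1 (pushK ε l v).2 ≤ cost l v := by
  cases l with
  | nil => simp [pushK, cost]
  | cons e l =>
    obtain ⟨ε', u⟩ := e
    simp only [pushK]
    split_ifs with h
    · simp only [cost]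
      linarith [cost_add_le l u (collapse ε' v), norm_collapse_le h]
    · simp [cost]

lemma IsPinchFree.pushK {l : List (Bool × ℤ × ℤ)} (hl : IsPinchFree l) (ε : Bool) (v : ℤ × ℤ) :
    IsPinchFree (pushK ε l v).1 := by
  cases l with
  | nil => exact List.isChain_singleton _
  | cons e l =>
    obtain ⟨ε', u⟩ := e
    simp only [LongWords.pushK]
    split_ifs with h
    · exact hl.tail
    · exact hl.cons (by simpa using h)

lemma eval_step (S : List (Bool × ℤ × ℤ) × (ℤ × ℤ)) (x : Fin 4 × Bool) :
    eval (step S x).1 (step S x).2 = eval S.1 S.2 * cond x.2 (gen x.1) (gen x.1)⁻¹ := by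
  obtain ⟨i, b⟩ := x
  by_cases hi : i = 3
  · subst hi
    cases b <;> simp [step, eval_pushK, gen, ← kLetter_not]
  · cases b <;> simp [step, hi, eval_add, gen, atPow_neg]

lemma cost_step_le (S : List (Bool × ℤ × ℤ) × (ℤ × ℤ)) (x : Fin 4 × Bool) :
    cost (step S x).1 (step S x).2 ≤ cost S.1 S.2 + 1 := by
  by_cases hi : x.1 = 3
  · simp only [step, hi, if_true]
    linarith [cost_pushK_le x.2 S.1 S.2]
  · have : ‖if x.2 then genVec x.1 else -genVec x.1‖ ≤ 1 := by
      unfold genVec; split_ifs <;> simp [Prod.norm_def]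
    simp only [step, hi, if_false]
    linarith [cost_add_le S.1 S.2 (if x.2 then genVec x.1 else -genVec x.1)]

lemma IsPinchFree.step {S : List (Bool × ℤ × ℤ) × (ℤ × ℤ)} (hS : IsPinchFree S.1)
    (x : Fin 4 × Bool) : IsPinchFree (step S x).1 := by
  unfold LongWords.step
  split
  exacts [hS.pushK _ _, hS]

lemma eval_normalForm (U : List (Fin 4 × Bool)) :
    eval (normalForm U).1 (normalForm U).2 = FreeGroup.lift gen (FreeGroup.mk U) := by
  suffices ∀ S, eval (U.foldl step S).1 (U.foldl step S).2 =
      eval S.1 S.2 * FreeGroup.lift gen (FreeGroup.mk U) by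
    simpa [normalForm, eval, atPow_zero] using this ([], 0)
  induction U with
  | nil => simp
  | cons x U ih => intro S; simp [ih, eval_step, mul_assoc]

lemma cost_normalForm_le (U : List (Fin 4 × Bool)) :
    cost (normalForm U).1 (normalForm U).2 ≤ U.length := by
  suffices ∀ S, cost (U.foldl step S).1 (U.foldl step S).2 ≤ cost S.1 S.2 + U.length by
    simpa [normalForm, cost] using this ([], 0)
  induction U with
  | nil => simp
  | cons x U ih =>
    intro S
    simp only [List.foldl_cons, List.length_cons]
    push_cast
    linarith [ih (step S x), cost_step_le S x]

lemma isPinchFree_normalForm (U : List (Fin 4 × Bool)) : IsPinchFree (normalForm U).1 := by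
  suffices ∀ S, IsPinchFree S.1 → IsPinchFree (U.foldl step S).1 from this _ List.isChain_nil
  induction U with
  | nil => exact fun S hS => hS
  | cons x U ih => exact fun S hS => ih _ (hS.step x)

def aBlock (b : ℤ) : List (Fin 4 × Bool) := (aF ^ b).toWord

lemma aBlock_natCast (n : ℕ) : aBlock n = List.replicate n (2, true) := by
  simp [aBlock, aF, FreeGroup.toWord_of_pow]

lemma aBlock_neg_natCast (n : ℕ) : aBlock (-n) = List.replicate n (2, false) := by
  simp [aBlock, aF, FreeGroup.toWord_of_pow, FreeGroup.toWord_inv, FreeGroup.invRev]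

lemma fst_of_mem_aBlock {b : ℤ} {x : Fin 4 × Bool} (hx : x ∈ aBlock b) : x.1 = 2 := by
  obtain ⟨n, rfl | rfl⟩ := Int.eq_nat_or_neg b <;>
    simp_all [aBlock_natCast, aBlock_neg_natCast, List.mem_replicate]

lemma three_notMem_aBlock (ε : Bool) (b : ℤ) : ((3 : Fin 4), ε) ∉ aBlock b :=
  fun h => by simpa using fst_of_mem_aBlock h

lemma length_aBlock (b : ℤ) : (aBlock b).length = b.natAbs := by
  obtain ⟨n, rfl | rfl⟩ := Int.eq_nat_or_neg b <;> simp [aBlock_natCast, aBlock_neg_natCast]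

lemma isReduced_cons_aBlock (ε : Bool) (b : ℤ) : FreeGroup.IsReduced ((3, ε) :: aBlock b) :=
  List.isChain_cons.2 ⟨fun y hy h => by
    simp [fst_of_mem_aBlock (List.mem_of_mem_head? hy)] at h, FreeGroup.isReduced_toWord⟩

lemma isReduced_aBlock_append (ε : Bool) (b : ℤ) :
    FreeGroup.IsReduced (aBlock b ++ [(3, ε)]) :=
  List.isChain_append.2 ⟨FreeGroup.isReduced_toWord, List.isChain_singleton _, fun y hy z hz h => by
    simp only [List.head?_cons, Option.mem_def, Option.some.injEq] at hz
    subst hz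
    simp [fst_of_mem_aBlock (List.mem_of_mem_getLast? hy)] at h⟩

lemma isReduced_cons_aBlock_append {ε' ε : Bool} {b : ℤ} (h : b ≠ 0 ∨ ε' = ε) :
    FreeGroup.IsReduced ((3, ε') :: aBlock b ++ [(3, ε)]) := by
  by_cases hb : b = 0
  · subst hb
    simpa [aBlock] using h
  · have hne : aBlock b ≠ [] := by simpa [← List.length_eq_zero_iff, length_aBlock] using hb
    simpa [aBlock] using FreeGroup.IsReduced.append_overlap (L₁ := [(3, ε')])
      (isReduced_cons_aBlock ε' b) (isReduced_aBlock_append ε b) hne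

/-- The reduced word of `(eval l v).left * a ^ c`: moving `tᵐ` to the right turns `k` into
`k a⁻ᵐ` and `k⁻¹` into `aᵐ k⁻¹`. -/
def word : List (Bool × ℤ × ℤ) → ℤ × ℤ → ℤ → List (Fin 4 × Bool)
  | [], v, c => aBlock (v.1 + c)
  | (ε, u) :: l, v, c =>
    word l u (if ε then 0 else level l u) ++ (3, ε) :: aBlock (v.1 + c - if ε then level l u else 0)

lemma right_eval (l : List (Bool × ℤ × ℤ)) (v : ℤ × ℤ) :
    (eval l v).right = .ofAdd (level l v) := by
  induction l generalizing v with
  | nil => rfl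
  | cons e l ih => simp [eval, level, mul_right, ih]

lemma left_eval_mul (l : List (Bool × ℤ × ℤ)) (v : ℤ × ℤ) (c : ℤ) :
    (eval l v).left * aF ^ c = FreeGroup.mk (word l v c) := by
  induction l generalizing v c with
  | nil => simp [eval, word, aBlock, zpow_add, FreeGroup.mk_toWord]
  | cons e l ih =>
    obtain ⟨ε, u⟩ := e
    have hcons (L : List (Fin 4 × Bool)) : FreeGroup.mk ((3, ε) :: L) =
        FreeGroup.mk [(3, ε)] * FreeGroup.mk L := rfl
    rw [word, ← FreeGroup.mul_mk, ← ih, hcons, aBlock, FreeGroup.mk_toWord]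
    simp only [eval, mul_left, mul_right, right_eval, left_atPow, left_kLetter, right_kLetter,
      mul_one, zpowersHom_apply, toAdd_ofAdd, map_zpow, twist_zpow_aF,
      twist_zpow_mk_singleton_three]
    cases ε <;> simp only [Bool.false_eq_true, if_true, if_false] <;> group

lemma isReduced_word_append {ε : Bool} {u : ℤ × ℤ} {l : List (Bool × ℤ × ℤ)}
    (h : IsPinchFree ((ε, u) :: l)) :
    FreeGroup.IsReduced (word l u (if ε then 0 else level l u) ++ [(3, ε)]) := by
  induction l generalizing ε u with
  | nil => exact isReduced_aBlock_append ε _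
  | cons e l ih =>
    obtain ⟨ε', u'⟩ := e
    have hb : (u.1 + (if ε then 0 else level l u' + u.2) - if ε' then level l u' else 0) ≠ 0
        ∨ ε' = ε := by
      have := (List.isChain_cons_cons.1 h).1
      simp only [Cancels, not_and] at this
      cases ε <;> cases ε' <;> simp_all
      omega
    simpa [word, level] using FreeGroup.IsReduced.append_overlap (L₂ := [(3, ε')]) (ih h.tail)
      (isReduced_cons_aBlock_append hb) (List.cons_ne_nil _ _)

lemma isReduced_word {l : List (Bool × ℤ × ℤ)} (hl : IsPinchFree l) (v : ℤ × ℤ) (c : ℤ) :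
    FreeGroup.IsReduced (word l v c) := by
  cases l with
  | nil => exact FreeGroup.isReduced_toWord
  | cons e l =>
    simpa [word, aBlock] using FreeGroup.IsReduced.append_overlap (L₂ := [(3, e.1)])
      (isReduced_word_append hl) (isReduced_cons_aBlock _ _) (List.cons_ne_nil _ _)

lemma abs_level_le_cost (l : List (Bool × ℤ × ℤ)) (v : ℤ × ℤ) :
    |(level l v : ℝ)| ≤ cost l v := by
  induction l generalizing v with
  | nil => simpa [level, cost, Int.norm_eq_abs] using norm_snd_le v
  | cons e l ih =>
    have := norm_snd_le v
    simp only [Int.norm_eq_abs] at this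
    simp only [level, cost]
    push_cast
    linarith [abs_add_le (level l e.2 : ℝ) v.2, ih e.2]

lemma natCast_le_cost_of_word_eq_append {n : ℕ} {p : List (Fin 4 × Bool)}
    {l : List (Bool × ℤ × ℤ)} {u : ℤ × ℤ}
    (h : word l u 0 = p ++ (3, true) :: List.replicate n (2, true)) :
    (n : ℝ) ≤ cost l u := by
  cases l with
  | nil => exact absurd (h ▸ by simp : ((3 : Fin 4), true) ∈ word [] u 0) (three_notMem_aBlock _ _)
  | cons e l =>
    obtain ⟨ε', u'⟩ := e
    rw [word] at h
    rcases List.eq_or_exists_of_append_cons_eq_append_cons (three_notMem_aBlock _ _) h with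
      ⟨-, hε', hblock⟩ | ⟨Z, -, hZ⟩
    · obtain rfl : ε' = true := by simpa using hε'
      have hn : (n : ℝ) = |(u.1 : ℝ) - level l u'| := by
        rw [← List.length_replicate (a := ((2 : Fin 4), true)) (n := n), ← hblock,
          length_aBlock, Nat.cast_natAbs]
        simp
      have hu : |(u.1 : ℝ)| ≤ ‖u‖ := by simpa [Int.norm_eq_abs] using norm_fst_le u
      simp only [cost]
      linarith [abs_sub (u.1 : ℝ) (level l u'), abs_level_le_cost l u']
    · have := List.mem_replicate.1 (hZ ▸ List.mem_append_right Z List.mem_cons_self)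
      simp at this

lemma natCast_le_cost_of_word_eq {n : ℕ} {p : List (Fin 4 × Bool)} {l : List (Bool × ℤ × ℤ)}
    {v : ℤ × ℤ} {c : ℤ} {s : List (Fin 4 × Bool)}
    (h : word l v c = (p ++ (3, true) :: List.replicate n (2, true)) ++ (3, true) :: s) :
    (n : ℝ) ≤ cost l v := by
  induction l generalizing v c s with
  | nil => exact absurd (h ▸ by simp : ((3 : Fin 4), true) ∈ word [] v c) (three_notMem_aBlock _ _)
  | cons e l ih =>
    obtain ⟨ε, u⟩ := e
    rw [word] at h
    simp only [cost]
    rcases List.eq_or_exists_of_append_cons_eq_append_cons (three_notMem_aBlock _ _) h with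
      ⟨h, hε, -⟩ | ⟨Z, h, -⟩
    · obtain rfl : ε = true := by simpa using hε
      linarith [natCast_le_cost_of_word_eq_append h, norm_nonneg v]
    · linarith [ih h, norm_nonneg v]

end LongWords

open LongWords

theorem long_words (n : ℕ) (hn : 1 ≤ n) (W : List (Fin 4 × Bool))
    (hred : FreeGroup.reduce W = W)
    (halph : ∀ x ∈ W, x.1 = 2 ∨ x.1 = 3)
    (hsub : ∃ p s : List (Fin 4 × Bool),
      W = p ++ (((3 : Fin 4), true) :: (List.replicate n ((2 : Fin 4), true) ++
        [((3 : Fin 4), true)])) ++ s) :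
    ∀ U : List (Fin 4 × Bool),
      π (FreeGroup.mk U) = π (FreeGroup.mk W) → (n : ℝ) / 2 < (U.length : ℝ) := by
  intro U hU
  obtain ⟨p, s, hW⟩ := hsub
  set S := normalForm U
  have hS : eval S.1 S.2 = SemidirectProduct.inl (FreeGroup.mk W) := by
    rw [eval_normalForm, ← lift_gen_mk halph]
    exact congrArg (PresentedGroup.toGroup lift_gen_of_mem_rels) hU
  have hword : word S.1 S.2 0 = W := by
    have hmk := left_eval_mul S.1 S.2 0
    rw [zpow_zero, mul_one, hS, SemidirectProduct.left_inl] at hmk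
    rw [← (isReduced_word (isPinchFree_normalForm U) _ _).reduce_eq, ← hred,
      ← FreeGroup.toWord_mk, ← FreeGroup.toWord_mk, hmk]
  have hn_le := natCast_le_cost_of_word_eq (hword.trans (by simpa using hW))
  have hcost := cost_normalForm_le U
  have hn_pos : (1 : ℝ) ≤ n := by exact_mod_cast hn
  linarith
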